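/- arXiv:1601.00438 — 2 statements merged into one kernel-verified Lean document; each statement's English description precedes it below -/
import Mathlib

section
/- Let P be a formal min-plus polynomial of degree n, let \(c\in\mathbb{R}\) be a finite tropical root of P with multiplicity m, and let m' be the sum of multiplicities of all roots of P strictly greater than c (including \(+\infty\)). Then \(\hat P(c)=P_{m'}+m'c=P_{m+m'}+(m+m')c\), and \(\hat P(c)<P_i+ic\) for all i with \(0\le i<m'\) and all i with \(m+m'<i\le n\). -/
/-!
Near a finite point `x` every term `min(y, c_i)` of the factorization is affine in `y`, so `P̂`
coincides with a line of slope `m'` on some `[x, x + δ]` and with a line of slope `m + m'` on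
`[x - δ, x]`. When a minimum of the lines `P_j + j y` coincides with a line of slope `k` on a
nondegenerate interval, the term attaining it at the midpoint has slope exactly `k`, since a
term of any other slope would drop below the line at one of the endpoints; this gives the two
equalities. A term of slope `j < m'` (resp. `j > m + m'`) is above the line at `x + δ`
(resp. `x - δ`), hence strictly above it at `x`.
-/

open scoped Classical

/-- The min-plus polynomial function `ŷ ↦ min_{0 ≤ k ≤ n} (P_k + k y)`. -/
noncomputable def tropEval (P : ℕ → WithTop ℝ) (n : ℕ) (y : ℝ) : WithTop ℝ :=
  (Finset.range (n + 1)).inf fun k => P k + (((k : ℝ) * y : ℝ) : WithTop ℝ)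

open Filter Set Topology

lemma tropEval_le (P : ℕ → WithTop ℝ) {n j : ℕ} (hj : j ≤ n) (y : ℝ) :
    tropEval P n y ≤ P j + (((j : ℝ) * y : ℝ) : WithTop ℝ) :=
  Finset.inf_le (Finset.mem_range_succ_iff.mpr hj)

lemma exists_tropEval_eq (P : ℕ → WithTop ℝ) (n : ℕ) (y : ℝ) :
    ∃ j ≤ n, tropEval P n y = P j + (((j : ℝ) * y : ℝ) : WithTop ℝ) := by
  obtain ⟨j, hj, hj_eq⟩ := Finset.exists_mem_eq_inf (Finset.range (n + 1)) ⟨0, by simp⟩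
    fun k => P k + (((k : ℝ) * y : ℝ) : WithTop ℝ)
  exact ⟨j, Finset.mem_range_succ_iff.mp hj, hj_eq⟩

lemma tropEval_lt_of_eq_line (P : ℕ → WithTop ℝ) {n j k : ℕ} (hj : j ≤ n) {F y z : ℝ}
    (hy : tropEval P n y = ((F + k * y : ℝ) : WithTop ℝ))
    (hz : tropEval P n z = ((F + k * z : ℝ) : WithTop ℝ))
    (hslope : ((j : ℝ) - k) * (z - y) < 0) :
    tropEval P n y < P j + (((j : ℝ) * y : ℝ) : WithTop ℝ) := by
  have hjz := tropEval_le P hj z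
  rw [hz] at hjz
  rw [hy]
  rcases eq_or_ne (P j) ⊤ with htop | hfin
  · rw [htop, top_add]
    exact WithTop.coe_lt_top _
  · lift P j to ℝ using hfin with p
    norm_cast at hjz ⊢
    nlinarith

lemma tropEval_eq_of_eqOn_line (P : ℕ → WithTop ℝ) (n k : ℕ) {F a b y : ℝ} (hab : a < b)
    (hline : ∀ z ∈ Icc a b, tropEval P n z = ((F + k * z : ℝ) : WithTop ℝ))
    (hy : y ∈ Icc a b) :
    tropEval P n y = P k + (((k : ℝ) * y : ℝ) : WithTop ℝ) := by
  have hmid : (a + b) / 2 ∈ Icc a b := ⟨by linarith, by linarith⟩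
  obtain ⟨j, hjn, hj⟩ := exists_tropEval_eq P n ((a + b) / 2)
  have hjk : j = k := by
    by_contra hne
    have hslope : ∃ z ∈ Icc a b, ((j : ℝ) - k) * (z - (a + b) / 2) < 0 := by
      rcases Nat.lt_or_gt_of_ne hne with hlt | hgt
      · have : (j : ℝ) < k := by exact_mod_cast hlt
        exact ⟨b, right_mem_Icc.mpr hab.le, by nlinarith⟩
      · have : (k : ℝ) < j := by exact_mod_cast hgt
        exact ⟨a, left_mem_Icc.mpr hab.le, by nlinarith⟩
    obtain ⟨z, hz, hslope⟩ := hslope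
    exact (tropEval_lt_of_eq_line P hjn (hline _ hmid) (hline z hz) hslope).ne hj
  subst hjk
  have hPj : P j = (F : WithTop ℝ) := by
    rw [hline _ hmid, WithTop.coe_add] at hj
    exact (WithTop.add_right_cancel WithTop.coe_ne_top hj).symm
  rw [hline y hy, hPj, WithTop.coe_add]

lemma eventually_min_coe_eq (c : WithTop ℝ) (x : ℝ) :
    ∀ᶠ z : ℝ in 𝓝 x, min (z : WithTop ℝ) c = min (x : WithTop ℝ) c +
      (((if (x : WithTop ℝ) < c then z - x else 0) +
        (if c = x then min (z - x) 0 else 0) : ℝ) : WithTop ℝ) := by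
  induction c using WithTop.recTopCoe with
  | top =>
    refine Eventually.of_forall fun z => ?_
    simp only [min_top_right, WithTop.coe_lt_top, if_true, WithTop.top_ne_coe, if_false,
      add_zero, ← WithTop.coe_add, add_sub_cancel]
  | coe r =>
    rcases lt_trichotomy r x with hlt | rfl | hgt
    · filter_upwards [eventually_gt_nhds hlt] with z hz
      simp [hz.le, hlt.le, hlt.not_gt, hlt.ne]
    · refine Eventually.of_forall fun z => ?_
      simp only [lt_self_iff_false, if_false, if_true, zero_add, min_self, ← WithTop.coe_min,
        ← WithTop.coe_add]
      congr 1
      rcases le_total z r with h | h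
      · simp [h, sub_nonpos.mpr h]
      · simp [h, sub_nonneg.mpr h]
    · filter_upwards [eventually_lt_nhds hgt] with z hz
      simp only [← WithTop.coe_min, min_eq_left hz.le, min_eq_left hgt.le, WithTop.coe_lt_coe,
        hgt, if_true, WithTop.coe_eq_coe, hgt.ne', if_false, add_zero, ← WithTop.coe_add,
        add_sub_cancel]

lemma eventually_sum_min_coe_eq {ι : Type*} [Fintype ι] (c : ι → WithTop ℝ) (x : ℝ) :
    ∀ᶠ z : ℝ in 𝓝 x, ∑ i, min (z : WithTop ℝ) (c i) = ∑ i, min (x : WithTop ℝ) (c i) +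
      (((Finset.univ.filter fun i => (x : WithTop ℝ) < c i).card * (z - x) +
        (Finset.univ.filter fun i => c i = (x : WithTop ℝ)).card * min (z - x) 0 : ℝ) :
        WithTop ℝ) := by
  filter_upwards [eventually_all.mpr fun i => eventually_min_coe_eq (c i) x] with z hz
  rw [Finset.sum_congr rfl fun i _ => hz i, Finset.sum_add_distrib, ← WithTop.coe_sum,
    Finset.sum_add_distrib, ← Finset.sum_filter, ← Finset.sum_filter, Finset.sum_const,
    Finset.sum_const, nsmul_eq_mul, nsmul_eq_mul]

lemma exists_tropEval_eq_line_near {ι : Type*} [Fintype ι] {P : ℕ → WithTop ℝ} {n : ℕ}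
    {c : ι → WithTop ℝ}
    (hfact : ∀ y : ℝ, tropEval P n y = P n + ∑ i, min (y : WithTop ℝ) (c i))
    {x F : ℝ} (hF : tropEval P n x = F) :
    ∃ δ > 0,
      (∀ z ∈ Icc x (x + δ), tropEval P n z =
        ((F - (Finset.univ.filter fun i => (x : WithTop ℝ) < c i).card * x +
          (Finset.univ.filter fun i => (x : WithTop ℝ) < c i).card * z : ℝ) : WithTop ℝ)) ∧
      (∀ z ∈ Icc (x - δ) x, tropEval P n z =
        ((F - (((Finset.univ.filter fun i => c i = (x : WithTop ℝ)).card +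
            (Finset.univ.filter fun i => (x : WithTop ℝ) < c i).card : ℕ) : ℝ) * x +
          (((Finset.univ.filter fun i => c i = (x : WithTop ℝ)).card +
            (Finset.univ.filter fun i => (x : WithTop ℝ) < c i).card : ℕ) : ℝ) * z : ℝ) :
          WithTop ℝ)) := by
  have hlocal : ∀ᶠ z : ℝ in 𝓝 x, tropEval P n z =
      ((F + ((Finset.univ.filter fun i => (x : WithTop ℝ) < c i).card * (z - x) +
        (Finset.univ.filter fun i => c i = (x : WithTop ℝ)).card * min (z - x) 0) : ℝ) :
        WithTop ℝ) := by
    filter_upwards [eventually_sum_min_coe_eq c x] with z hz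
    rw [hfact, hz, ← add_assoc, ← hfact, hF, ← WithTop.coe_add]
  obtain ⟨ε, hε, hball⟩ := Metric.eventually_nhds_iff.mp hlocal
  have hdist : ∀ z ∈ Icc (x - ε / 2) (x + ε / 2), dist z x < ε := fun z hz => by
    rw [Real.dist_eq, abs_lt]
    constructor <;> linarith [hz.1, hz.2]
  refine ⟨ε / 2, by positivity, fun z hz => ?_, fun z hz => ?_⟩
  · rw [hball (hdist z ⟨by linarith [hz.1], hz.2⟩), min_eq_right (by linarith [hz.1])]
    congr 1
    ring
  · rw [hball (hdist z ⟨hz.1, by linarith [hz.2]⟩), min_eq_left (by linarith [hz.2])]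
    congr 1
    push_cast
    ring

theorem stmt_5_general (n : ℕ) (P : ℕ → WithTop ℝ) (hdeg : P n ≠ ⊤)
    (c : Fin n → WithTop ℝ)
    (hfact : ∀ y : ℝ, tropEval P n y = P n + ∑ i : Fin n, min (y : WithTop ℝ) (c i))
    (x : ℝ) (m m' : ℕ)
    (hm : m = (Finset.univ.filter fun i : Fin n => c i = (x : WithTop ℝ)).card)
    (hm' : m' = (Finset.univ.filter fun i : Fin n => (x : WithTop ℝ) < c i).card) :
    tropEval P n x = P m' + (((m' : ℝ) * x : ℝ) : WithTop ℝ) ∧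
    tropEval P n x = P (m + m') + ((((m + m' : ℕ) : ℝ) * x : ℝ) : WithTop ℝ) ∧
    (∀ i, i < m' → tropEval P n x < P i + (((i : ℝ) * x : ℝ) : WithTop ℝ)) ∧
    (∀ i, m + m' < i → i ≤ n → tropEval P n x < P i + (((i : ℝ) * x : ℝ) : WithTop ℝ)) := by
  obtain ⟨F, hF⟩ := WithTop.ne_top_iff_exists.mp <| ne_top_of_le_ne_top
    (WithTop.add_ne_top.mpr ⟨hdeg, WithTop.coe_ne_top⟩) (tropEval_le P le_rfl x)
  obtain ⟨δ, hδ, hright, hleft⟩ := exists_tropEval_eq_line_near hfact hF.symm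
  rw [← hm'] at hright
  rw [← hm, ← hm'] at hleft
  have hxR : x ∈ Icc x (x + δ) := left_mem_Icc.mpr (by linarith)
  have hxL : x ∈ Icc (x - δ) x := right_mem_Icc.mpr (by linarith)
  refine ⟨tropEval_eq_of_eqOn_line P n m' (by linarith) hright hxR,
    tropEval_eq_of_eqOn_line P n (m + m') (by linarith) hleft hxL, fun i hi => ?_,
    fun i hi hin => ?_⟩
  · have hm'n : m' ≤ n := hm' ▸ (Finset.card_filter_le _ _).trans (by simp)
    have : (i : ℝ) < m' := by exact_mod_cast hi
    exact tropEval_lt_of_eq_line P (hi.le.trans hm'n) (hright x hxR)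
      (hright _ (right_mem_Icc.mpr (by linarith))) (by nlinarith)
  · have : ((m + m' : ℕ) : ℝ) < i := by exact_mod_cast hi
    exact tropEval_lt_of_eq_line P hin (hleft x hxL)
      (hleft _ (left_mem_Icc.mpr (by linarith))) (by nlinarith)

/-- If `x` is a finite tropical root of `P` of multiplicity `m`, and `m'` is the
sum of the multiplicities of the roots of `P` strictly greater than `x`
(`+∞` included), then `P̂(x) = P_{m'} + m' x = P_{m+m'} + (m+m') x`, and
`P̂(x) < P_i + i x` for `0 ≤ i < m'` and for `m + m' < i ≤ n`. -/
theorem stmt_5 (n : ℕ) (P : ℕ → WithTop ℝ) (hdeg : P n ≠ ⊤)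
    (c : Fin n → WithTop ℝ) (hc : Monotone c)
    (hfact : ∀ y : ℝ, tropEval P n y = P n + ∑ i : Fin n, min (y : WithTop ℝ) (c i))
    (x : ℝ) (m m' : ℕ)
    (hm : m = (Finset.univ.filter fun i : Fin n => c i = (x : WithTop ℝ)).card)
    (hm1 : 0 < m)
    (hm' : m' = (Finset.univ.filter fun i : Fin n => (x : WithTop ℝ) < c i).card) :
    tropEval P n x = P m' + (((m' : ℝ) * x : ℝ) : WithTop ℝ) ∧
    tropEval P n x = P (m + m') + ((((m + m' : ℕ) : ℝ) * x : ℝ) : WithTop ℝ) ∧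
    (∀ i, i < m' → tropEval P n x < P i + (((i : ℝ) * x : ℝ) : WithTop ℝ)) ∧
    (∀ i, m + m' < i → i ≤ n → tropEval P n x < P i + (((i : ℝ) * x : ℝ) : WithTop ℝ)) :=
  stmt_5_general n P hdeg c hfact x m m' hm hm'
end

section
/- Let \(B\in(\mathbb R\cup\{+\infty\})^{n\times n}\) with \(\mathrm{per}\,B\ne+\infty\), let (U,V) be a Hungarian pair with respect to B, and suppose the identity permutation is optimal for B. Then Opt(B) is the disjoint union of the strongly connected components of the saturation graph Sat(B,U,V): an arc of Sat(B,U,V) belongs to Opt(B) if and only if it lies in a strongly connected component of Sat(B,U,V). -/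
open scoped Classical

/-- The min-plus permanent `per B = min_σ ∑ᵢ B_{i σ(i)}`. -/
noncomputable def mpPer (n : ℕ) (B : Matrix (Fin n) (Fin n) (WithTop ℝ)) : WithTop ℝ :=
  (Finset.univ : Finset (Equiv.Perm (Fin n))).inf fun σ => ∑ i, B i (σ i)

/-- `(i,j)` is an arc of `Opt(B)`: some optimal permutation maps `i` to `j`. -/
def OptArc (n : ℕ) (B : Matrix (Fin n) (Fin n) (WithTop ℝ)) (i j : Fin n) : Prop :=
  ∃ σ : Equiv.Perm (Fin n), (∑ k, B k (σ k)) = mpPer n B ∧ σ i = j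

/-- `(U,V)` is a Hungarian pair with respect to `B`. -/
def HungPair (n : ℕ) (B : Matrix (Fin n) (Fin n) (WithTop ℝ)) (U V : Fin n → ℝ) : Prop :=
  (∀ i j, ((U i + V j : ℝ) : WithTop ℝ) ≤ B i j) ∧
  ((∑ i, U i + ∑ j, V j : ℝ) : WithTop ℝ) = mpPer n B

/-- `(i,j)` is an arc of the saturation graph `Sat(B,U,V)`. -/
def SatArc (n : ℕ) (B : Matrix (Fin n) (Fin n) (WithTop ℝ)) (U V : Fin n → ℝ)
    (i j : Fin n) : Prop :=
  B i j = ((U i + V j : ℝ) : WithTop ℝ)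

/-!
With `B i j ≥ U i + V j` everywhere and `∑ U + ∑ V = per B`, a permutation is optimal exactly
when all of its arcs are saturated. So optimal arcs lie on cycles of saturated arcs, and
conversely a saturated arc `i → j` closed by a saturated path `j ⟶ i`, shortened to a simple
one, is a cycle; extended by the identity (saturated, since `id` is optimal) it is an optimal
permutation sending `i` to `j`.
-/

namespace List

variable {α : Type*} {r : α → α → Prop}

theorem exists_nodup_isChain_cons_of_relationReflTransGen {a b : α}
    (h : Relation.ReflTransGen r a b) :
    ∃ l, IsChain r (a :: l) ∧ getLast (a :: l) (cons_ne_nil _ _) = b ∧ (a :: l).Nodup := by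
  refine Relation.ReflTransGen.head_induction_on h ⟨[], .singleton _, rfl, nodup_singleton _⟩ ?_
  rintro a c hac - ⟨l, hchain, hlast, hnodup⟩
  by_cases ha : a ∈ c :: l
  · -- `a` is revisited: drop the loop, keeping the walk from that later visit on
    obtain ⟨s, t, hst⟩ := append_of_mem ha
    have hsuffix : (a :: t) <:+ (c :: l) := ⟨s, hst.symm⟩
    exact ⟨t, hchain.suffix hsuffix, hlast ▸ hsuffix.getLast (cons_ne_nil a t),
      hnodup.sublist hsuffix.sublist⟩
  · exact ⟨c :: l, hchain.cons_cons hac, by rwa [getLast_cons_cons],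
      nodup_cons.2 ⟨ha, hnodup⟩⟩

theorem rel_formPerm_apply [DecidableEq α] (hr : ∀ x, r x x) {a : α} {l : List α}
    (hnodup : (a :: l).Nodup) (hchain : IsChain r (a :: l))
    (hwrap : r ((a :: l).getLast (cons_ne_nil _ _)) a) (x : α) :
    r x (formPerm (a :: l) x) := by
  by_cases hx : x ∈ a :: l
  · obtain ⟨k, hk, rfl⟩ := getElem_of_mem hx
    rw [formPerm_apply_getElem _ hnodup k hk]
    rcases Nat.lt_or_ge (k + 1) (a :: l).length with hlt | hge
    · simpa only [Nat.mod_eq_of_lt hlt] using isChain_iff_getElem.1 hchain k hlt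
    · have hk' : k = (a :: l).length - 1 := by omega
      subst hk'
      simpa [Nat.sub_add_cancel (length_pos_of_mem hx), getLast_eq_getElem] using hwrap
  · rw [formPerm_apply_of_notMem hx]
    exact hr x

end List

namespace Equiv.Perm

variable {α : Type*} {r : α → α → Prop}

theorem reflTransGen_apply_self [Finite α] {σ : Perm α} (hσ : ∀ x, r x (σ x)) (x : α) :
    Relation.ReflTransGen r (σ x) x := by
  have hpow : ∀ m : ℕ, Relation.ReflTransGen r (σ x) ((σ ^ m) (σ x)) := by
    intro m
    induction m with
    | zero => exact .refl
    | succ m ih => exact ih.tail (by rw [pow_succ', mul_apply]; exact hσ _)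
  obtain ⟨m, hm⟩ := (sameCycle_apply_left.2 (SameCycle.refl σ x)).exists_nat_pow_eq
  simpa only [hm] using hpow m

theorem exists_forall_rel_apply_of_reflTransGen [DecidableEq α] (hr : ∀ x, r x x) {i j : α}
    (hij : r i j) (hji : Relation.ReflTransGen r j i) :
    ∃ σ : Perm α, (∀ x, r x (σ x)) ∧ σ i = j := by
  obtain ⟨l, hchain, hlast, hnodup⟩ :=
    List.exists_nodup_isChain_cons_of_relationReflTransGen hji
  refine ⟨List.formPerm (j :: l), List.rel_formPerm_apply hr hnodup hchain (hlast ▸ hij), ?_⟩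
  rw [← hlast, List.formPerm_apply_getLast]

end Equiv.Perm

theorem WithTop.sum_eq_coe_sum_iff {ι M : Type*} [Fintype ι] [AddCommMonoid M]
    [PartialOrder M] [IsOrderedCancelAddMonoid M] {a : ι → M} {b : ι → WithTop M}
    (hle : ∀ i, (a i : WithTop M) ≤ b i) :
    ∑ i, b i = ↑(∑ i, a i) ↔ ∀ i, b i = a i := by
  by_cases htop : ∃ i, b i = ⊤
  · obtain ⟨i, hi⟩ := htop
    have hsum : ∑ i, b i = ⊤ := WithTop.sum_eq_top.2 ⟨i, Finset.mem_univ i, hi⟩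
    simp only [hsum, WithTop.top_ne_coe, false_iff, not_forall]
    exact ⟨i, by simp [hi]⟩
  · lift b to ι → M using not_exists.1 htop
    simp only [← WithTop.coe_sum, WithTop.coe_inj, WithTop.coe_le_coe] at hle ⊢
    rw [eq_comm, Finset.sum_eq_sum_iff_of_le fun i _ => hle i]
    simp [eq_comm]

theorem HungPair.sum_eq_mpPer_iff {n : ℕ} {B : Matrix (Fin n) (Fin n) (WithTop ℝ)}
    {U V : Fin n → ℝ} (hUV : HungPair n B U V) (σ : Equiv.Perm (Fin n)) :
    ∑ k, B k (σ k) = mpPer n B ↔ ∀ k, SatArc n B U V k (σ k) := by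
  have hdual : ∑ k, (U k + V (σ k)) = ∑ i, U i + ∑ j, V j := by
    rw [Finset.sum_add_distrib, Equiv.sum_comp σ V]
  rw [← hUV.2, ← hdual]
  exact WithTop.sum_eq_coe_sum_iff fun k => hUV.1 k (σ k)

theorem stmt_18_general (n : ℕ) (B : Matrix (Fin n) (Fin n) (WithTop ℝ))
    (U V : Fin n → ℝ) (hUV : HungPair n B U V)
    (hid : (∑ i, B i i) = mpPer n B) :
    ∀ i j, OptArc n B i j ↔
      (SatArc n B U V i j ∧ Relation.ReflTransGen (SatArc n B U V) j i) := by
  have hrefl : ∀ k, SatArc n B U V k k := (hUV.sum_eq_mpPer_iff 1).1 hid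
  intro i j
  constructor
  · rintro ⟨σ, hσ, rfl⟩
    have hsat := (hUV.sum_eq_mpPer_iff σ).1 hσ
    exact ⟨hsat i, Equiv.Perm.reflTransGen_apply_self hsat i⟩
  · rintro ⟨hij, hji⟩
    obtain ⟨σ, hsat, hσi⟩ := Equiv.Perm.exists_forall_rel_apply_of_reflTransGen hrefl hij hji
    exact ⟨σ, (hUV.sum_eq_mpPer_iff σ).2 hsat, hσi⟩

/-- If the identity permutation is optimal for `B`, then `Opt(B)` is the
disjoint union of the strongly connected components of `Sat(B,U,V)`: an arc
`(i,j)` belongs to `Opt(B)` iff it is a saturated arc lying in a strongly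
connected component, i.e. there is also a saturated path from `j` back to `i`. -/
theorem stmt_18 (n : ℕ) (B : Matrix (Fin n) (Fin n) (WithTop ℝ))
    (hper : mpPer n B ≠ ⊤) (U V : Fin n → ℝ) (hUV : HungPair n B U V)
    (hid : (∑ i, B i i) = mpPer n B) :
    ∀ i j, OptArc n B i j ↔
      (SatArc n B U V i j ∧ Relation.ReflTransGen (SatArc n B U V) j i) :=
  stmt_18_general n B U V hUV hid
end
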